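/- Let (V, Ω) be a symplectic vector space and T : V × V × V → ℝ a totally symmetric trilinear form. Suppose that for every compatible complex structure j on (V, Ω) and all X, Y, Z ∈ V the following two identities hold: T(X,Y,Z) = T(jX,jY,Z) + T(jX,Y,jZ) + T(X,jY,jZ) and T(jX,jY,jZ) = T(jX,Y,Z) + T(X,jY,Z) + T(X,Y,jZ). Then T = 0. (These two identities together express that the complex-trilinear extension of T vanishes on the −i eigenspace of every compatible j; this is the key algebraic step in the proof of Theorem 6.5(ii), that two symplectic connections inducing the same twistor almost complex structure are equal.) -/

import Mathlib

open Module Finset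

universe u

set_option maxHeartbeats 2000000

theorem darboux_aux (m : ℕ) : ∀ (V : Type u) [AddCommGroup V] [Module ℝ V]
    [FiniteDimensional ℝ V], Module.finrank ℝ V = m →
    ∀ (Ω : V →ₗ[ℝ] V →ₗ[ℝ] ℝ), (∀ v, Ω v v = 0) → (∀ u, (∀ v, Ω u v = 0) → u = 0) →
    ∃ (n : ℕ) (b : Basis (Fin n ⊕ Fin n) ℝ V),
      (∀ i k, Ω (b (.inl i)) (b (.inl k)) = 0) ∧
      (∀ i k, Ω (b (.inr i)) (b (.inr k)) = 0) ∧
      (∀ i k, Ω (b (.inl i)) (b (.inr k)) = if i = k then 1 else 0) := by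
  induction m using Nat.strong_induction_on with
  | _ m IH =>
  intro V _ _ _ hm Ω halt hnd
  classical
  have hskew : ∀ a b : V, Ω a b = - Ω b a := by
    intro a b
    have h := halt (a + b)
    simp only [map_add, LinearMap.add_apply, halt] at h
    linarith
  rcases Nat.eq_zero_or_pos m with h0 | hpos
  · subst h0
    have : Subsingleton V := by
      rw [← Module.finrank_zero_iff (R := ℝ)]; exact hm
    refine ⟨0, Basis.empty V, ?_, ?_, ?_⟩ <;> intro i k <;> exact i.elim0
  · have hnt : Nontrivial V := Module.finrank_pos_iff.mp (hm ▸ hpos)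
    obtain ⟨u, hu⟩ := exists_ne (0 : V)
    obtain ⟨v₀, hv₀⟩ : ∃ v₀, Ω u v₀ ≠ 0 := by
      by_contra h; push_neg at h; exact hu (hnd u h)
    set v : V := (Ω u v₀)⁻¹ • v₀ with hv
    have huv : Ω u v = 1 := by
      simp [hv, map_smul]
      field_simp
    have hvu : Ω v u = -1 := by rw [hskew, huv]
    set W : Submodule ℝ V := LinearMap.ker (Ω u) ⊓ LinearMap.ker (Ω v) with hWdef
    have memW : ∀ x : V, x ∈ W ↔ Ω u x = 0 ∧ Ω v x = 0 := by
      intro x; simp [hWdef, LinearMap.mem_ker]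
    have hdec : ∀ x : V, x - (Ω x v) • u - (Ω u x) • v ∈ W := by
      intro x
      rw [memW]
      constructor
      · simp [map_sub, map_smul, huv, halt]
      · simp [map_sub, map_smul, hvu, halt]
        rw [hskew x v]; ring
    set ΩW : W →ₗ[ℝ] W →ₗ[ℝ] ℝ := Ω.domRestrict₁₂ W W with hΩW
    have hWalt : ∀ w : W, ΩW w w = 0 := fun w => halt w
    have hWnd : ∀ w : W, (∀ w' : W, ΩW w w' = 0) → w = 0 := by
      intro w hw
      have h1 : Ω (w : V) u = 0 := by
        rw [hskew, ((memW w).mp w.2).1]; ring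
      have h2 : Ω (w : V) v = 0 := by
        rw [hskew, ((memW w).mp w.2).2]; ring
      have : (w : V) = 0 := by
        apply hnd
        intro x
        have hx := hdec x
        have h3 : Ω (w : V) (x - (Ω x v) • u - (Ω u x) • v) = 0 := hw ⟨_, hx⟩
        simp only [map_sub, map_smul, smul_eq_mul, h1, h2] at h3
        linarith
      exact Subtype.ext this
    have huW : u ∉ W := by
      intro h
      have := ((memW u).mp h).2
      rw [hvu] at this; norm_num at this
    have hlt : finrank ℝ W < m := by
      rw [← hm]
      apply Submodule.finrank_lt
      exact (fun (h : W = ⊤) => huW (h ▸ Submodule.mem_top))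
    obtain ⟨n, bW, h1, h2, h3⟩ := IH (finrank ℝ W) hlt W rfl ΩW hWalt hWnd
    -- assemble
    set g : Fin (n+1) ⊕ Fin (n+1) → V :=
      Sum.elim (fun i => Fin.cases u (fun i' => (bW (Sum.inl i') : V)) i)
               (fun i => Fin.cases v (fun i' => (bW (Sum.inr i') : V)) i) with hg
    have hgl0 : g (Sum.inl 0) = u := rfl
    have hgr0 : g (Sum.inr 0) = v := rfl
    have hgls : ∀ i : Fin n, g (Sum.inl i.succ) = (bW (Sum.inl i) : V) := fun i => by
      simp [hg]
    have hgrs : ∀ i : Fin n, g (Sum.inr i.succ) = (bW (Sum.inr i) : V) := fun i => by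
      simp [hg]
    have hW0 : ∀ w : V, w ∈ W → Ω u w = 0 ∧ Ω v w = 0 ∧ Ω w u = 0 ∧ Ω w v = 0 := by
      intro w hw
      obtain ⟨a, b⟩ := (memW w).mp hw
      exact ⟨a, b, by rw [hskew, a]; ring, by rw [hskew, b]; ring⟩
    have G1 : ∀ i k, Ω (g (Sum.inl i)) (g (Sum.inl k)) = 0 := by
      intro i k
      induction i using Fin.cases with
      | zero =>
        induction k using Fin.cases with
        | zero => simpa [hgl0] using halt u
        | succ k => rw [hgl0, hgls]; exact (hW0 _ (bW (Sum.inl k)).2).1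
      | succ i =>
        induction k using Fin.cases with
        | zero => rw [hgl0, hgls]; exact (hW0 _ (bW (Sum.inl i)).2).2.2.1
        | succ k => rw [hgls, hgls]; exact h1 i k
    have G2 : ∀ i k, Ω (g (Sum.inr i)) (g (Sum.inr k)) = 0 := by
      intro i k
      induction i using Fin.cases with
      | zero =>
        induction k using Fin.cases with
        | zero => simpa [hgr0] using halt v
        | succ k => rw [hgr0, hgrs]; exact (hW0 _ (bW (Sum.inr k)).2).2.1
      | succ i =>
        induction k using Fin.cases with
        | zero => rw [hgr0, hgrs]; exact (hW0 _ (bW (Sum.inr i)).2).2.2.2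
        | succ k => rw [hgrs, hgrs]; exact h2 i k
    have G3 : ∀ i k, Ω (g (Sum.inl i)) (g (Sum.inr k)) = if i = k then 1 else 0 := by
      intro i k
      induction i using Fin.cases with
      | zero =>
        induction k using Fin.cases with
        | zero => simpa [hgl0, hgr0] using huv
        | succ k =>
          rw [hgl0, hgrs]
          rw [(hW0 _ (bW (Sum.inr k)).2).1]
          simp [(Fin.succ_ne_zero k).symm]
      | succ i =>
        induction k using Fin.cases with
        | zero =>
          rw [hgr0, hgls]
          rw [(hW0 _ (bW (Sum.inl i)).2).2.2.2]
          simp [Fin.succ_ne_zero i]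
        | succ k =>
          rw [hgls, hgrs,
            show (Ω (bW (Sum.inl i) : V)) (bW (Sum.inr k) : V)
              = (ΩW (bW (Sum.inl i))) (bW (Sum.inr k)) from rfl, h3 i k]
          simp [Fin.succ_inj]
    have G3' : ∀ i k, Ω (g (Sum.inr i)) (g (Sum.inl k)) = if i = k then -1 else 0 := by
      intro i k
      rw [hskew, G3 k i]
      by_cases h : i = k <;> simp [h, eq_comm]
    have hli : LinearIndependent ℝ g := by
      rw [Fintype.linearIndependent_iff]
      intro c hc s
      have key : ∀ x : V, Ω (∑ i, c i • g i) x = 0 := by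
        intro x; rw [hc]; simp
      have expand : ∀ x : V, Ω (∑ i, c i • g i) x
          = ∑ i : Fin (n+1), c (Sum.inl i) * Ω (g (Sum.inl i)) x
          + ∑ i : Fin (n+1), c (Sum.inr i) * Ω (g (Sum.inr i)) x := by
        intro x
        simp [map_sum, LinearMap.sum_apply, map_smul, Fintype.sum_sum_type]
      cases s with
      | inl k =>
        have := key (g (Sum.inr k))
        rw [expand] at this
        simp only [G3, G2, mul_ite, mul_one, mul_zero] at this
        simpa [Finset.sum_ite_eq' Finset.univ k] using this
      | inr k =>
        have := key (g (Sum.inl k))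
        rw [expand] at this
        simp only [G3', G1, mul_ite, mul_zero] at this
        simp [Finset.sum_ite_eq' Finset.univ k] at this
        exact this
    have hsp : ⊤ ≤ Submodule.span ℝ (Set.range g) := by
      intro x _
      have hx := hdec x
      have hw : (⟨_, hx⟩ : W) = ∑ s, bW.repr ⟨_, hx⟩ s • bW s := (bW.sum_repr _).symm
      have hwV : x - (Ω x v) • u - (Ω u x) • v
          = ∑ s, bW.repr ⟨_, hx⟩ s • (bW s : V) := by
        have := congrArg (Subtype.val) hw
        simp only [Submodule.coe_sum, Submodule.coe_smul] at this; exact this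
      have hxeq : x = (Ω x v) • u + (Ω u x) • v + ∑ s, bW.repr ⟨_, hx⟩ s • (bW s : V) := by
        rw [← hwV]; abel
      rw [hxeq]
      apply Submodule.add_mem
      apply Submodule.add_mem
      · exact Submodule.smul_mem _ _ (Submodule.subset_span ⟨Sum.inl 0, hgl0⟩)
      · exact Submodule.smul_mem _ _ (Submodule.subset_span ⟨Sum.inr 0, hgr0⟩)
      · apply Submodule.sum_mem
        intro s _
        apply Submodule.smul_mem
        apply Submodule.subset_span
        cases s with
        | inl i => exact ⟨Sum.inl i.succ, hgls i⟩
        | inr i => exact ⟨Sum.inr i.succ, hgrs i⟩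
    refine ⟨n+1, Basis.mk hli hsp, ?_, ?_, ?_⟩ <;> intro i k <;>
      rw [Basis.mk_apply, Basis.mk_apply]
    · exact G1 i k
    · exact G2 i k
    · exact G3 i k


/-- a totally symmetric trilinear form `T` on a symplectic vector
space whose complex-trilinear extension vanishes on the `-i` eigenspace of every
compatible complex structure `j` (expressed by the two real identities below)
must vanish identically. -/
theorem totally_symmetric_trilinear_vanishing_on_antiholomorphic_eq_zero
    {V : Type*} [AddCommGroup V] [Module ℝ V] [FiniteDimensional ℝ V]
    (Ω : V →ₗ[ℝ] V →ₗ[ℝ] ℝ)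
    (hΩalt : ∀ v : V, Ω v v = 0)
    (hΩnd : ∀ u : V, (∀ v : V, Ω u v = 0) → u = 0)
    (T : V →ₗ[ℝ] V →ₗ[ℝ] V →ₗ[ℝ] ℝ)
    (hsymm12 : ∀ X Y Z : V, T X Y Z = T Y X Z)
    (hsymm23 : ∀ X Y Z : V, T X Y Z = T X Z Y)
    (hvanish : ∀ j : V →ₗ[ℝ] V,
      (∀ u v : V, Ω (j u) v + Ω u (j v) = 0) →
      (∀ v : V, j (j v) = - v) →
      (∀ u : V, u ≠ 0 → 0 < Ω u (j u)) →
      ∀ X Y Z : V,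
        T X Y Z = T (j X) (j Y) Z + T (j X) Y (j Z) + T X (j Y) (j Z) ∧
        T (j X) (j Y) (j Z) = T (j X) Y Z + T X (j Y) Z + T X Y (j Z)) :
    ∀ X Y Z : V, T X Y Z = 0 := by
  classical
  have hskew : ∀ a c : V, Ω a c = - Ω c a := by
    intro a c
    have h := hΩalt (a + c)
    simp only [map_add, LinearMap.add_apply, hΩalt] at h
    linarith
  obtain ⟨n, b, G1, G2, G3⟩ :=
    darboux_aux (Module.finrank ℝ V) V rfl Ω hΩalt hΩnd
  have key : ∀ (lam : Fin n → ℝ), (∀ i, 0 < lam i) → ∀ p q r : Fin n,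
      (lam p * (lam q * (lam r * T (b (.inr p)) (b (.inr q)) (b (.inr r))))
        = lam p * T (b (.inr p)) (b (.inl q)) (b (.inl r))
        + lam q * T (b (.inl p)) (b (.inr q)) (b (.inl r))
        + lam r * T (b (.inl p)) (b (.inl q)) (b (.inr r)))
      ∧ ((-(lam p)⁻¹) * ((-(lam q)⁻¹) * ((-(lam r)⁻¹) * T (b (.inl p)) (b (.inl q)) (b (.inl r))))
        = (-(lam p)⁻¹) * T (b (.inl p)) (b (.inr q)) (b (.inr r))
        + (-(lam q)⁻¹) * T (b (.inr p)) (b (.inl q)) (b (.inr r))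
        + (-(lam r)⁻¹) * T (b (.inr p)) (b (.inr q)) (b (.inl r))) := by
    classical
    intro lam hlam
    set jf : Fin n ⊕ Fin n → V :=
      Sum.elim (fun i => lam i • b (Sum.inr i)) (fun i => -(lam i)⁻¹ • b (Sum.inl i)) with hjf
    set j : V →ₗ[ℝ] V := b.constr ℝ jf with hjdef
    have hjl : ∀ i, j (b (Sum.inl i)) = lam i • b (Sum.inr i) := fun i => by
      rw [hjdef, Basis.constr_basis]; rfl
    have hjr : ∀ i, j (b (Sum.inr i)) = -(lam i)⁻¹ • b (Sum.inl i) := fun i => by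
      rw [hjdef, Basis.constr_basis]; rfl
    have G3' : ∀ i k, Ω (b (Sum.inr i)) (b (Sum.inl k)) = if k = i then -1 else 0 := by
      intro i k
      rw [hskew, G3 k i]
      by_cases h : k = i <;> simp [h]
    -- j ∘ j = -1
    have hj2 : ∀ v : V, j (j v) = -v := by
      have : j.comp j = -LinearMap.id := by
        apply b.ext
        intro s
        cases s with
        | inl i =>
          simp [hjl, hjr, map_smul, smul_smul]
          rw [mul_inv_cancel₀ (hlam i).ne']
          simp
        | inr i =>
          simp [hjl, hjr, map_smul, smul_smul]
          rw [inv_mul_cancel₀ (hlam i).ne']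
          simp
      intro v
      have := congrArg (fun f => f v) this
      simpa using this
    -- compatibility
    have hj1 : ∀ x y : V, Ω (j x) y + Ω x (j y) = 0 := by
      have : (Ω.comp j) + (Ω.compl₂ j) = 0 := by
        apply b.ext
        intro s
        apply b.ext
        intro t
        simp only [LinearMap.add_apply, LinearMap.comp_apply, LinearMap.compl₂_apply,
          LinearMap.zero_apply]
        cases s with
        | inl i =>
          cases t with
          | inl k =>
            rw [hjl, hjl]
            simp only [map_smul, LinearMap.smul_apply, smul_eq_mul, G3, G3']
            by_cases h : i = k
            · subst h; simp
            · have h' : ¬ k = i := fun hh => h hh.symm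
              simp [h, h']
          | inr k =>
            rw [hjl, hjr]
            simp [map_smul, G1, G2]
        | inr i =>
          cases t with
          | inl k =>
            rw [hjr, hjl]
            simp [map_smul, G1, G2]
          | inr k =>
            rw [hjr, hjr]
            simp only [map_smul, LinearMap.smul_apply, smul_eq_mul, G3, G3']
            by_cases h : i = k
            · subst h; simp
            · have h' : ¬ k = i := fun hh => h hh.symm
              simp [h, h']
      intro x y
      have := congrArg (fun f => f x y) this
      simpa using this
    -- positivity
    have hj3 : ∀ x : V, x ≠ 0 → 0 < Ω x (j x) := by
      intro x hx
      set c := b.repr x with hc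
      set mu : Fin n ⊕ Fin n → ℝ := Sum.elim (fun i => lam i) (fun i => (lam i)⁻¹) with hmu
      have hmupos : ∀ s, 0 < mu s := by
        intro s; cases s with
        | inl i => exact hlam i
        | inr i => exact inv_pos.mpr (hlam i)
      have hbj : ∀ s t, Ω (b s) (j (b t)) = if s = t then mu s else 0 := by
        intro s t
        cases t with
        | inl k =>
          rw [hjl]
          cases s with
          | inl i =>
            simp only [map_smul, smul_eq_mul, G3]
            by_cases h : i = k
            · subst h; simp [hmu]
            · simp [h, Sum.inl.injEq]
          | inr i =>
            simp [map_smul, G2]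
        | inr k =>
          rw [hjr]
          cases s with
          | inl i =>
            simp [map_smul, G1]
          | inr i =>
            simp only [map_smul, smul_eq_mul, G3']
            by_cases h : k = i
            · subst h; simp [hmu]
            · have h' : ¬ i = k := fun hh => h hh.symm
              simp [h, h']
      have hrep : x = ∑ s, c s • b s := (b.sum_repr x).symm
      have e1 : Ω x (j x) = ∑ s, ∑ t, c s * (c t * Ω (b s) (j (b t))) := by
        conv_lhs => rw [hrep]
        simp only [map_sum, map_smul, LinearMap.sum_apply, LinearMap.smul_apply, smul_eq_mul,
          Finset.mul_sum]
        rw [Finset.sum_comm]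
        apply Finset.sum_congr rfl
        intro s _
        apply Finset.sum_congr rfl
        intro t _
        ring
      have e2 : Ω x (j x) = ∑ s, c s * (c s * mu s) := by
        rw [e1]
        apply Finset.sum_congr rfl
        intro s _
        rw [Finset.sum_eq_single s]
        · rw [hbj]; simp
        · intro t _ ht; rw [hbj]; simp [Ne.symm ht]
        · intro h; exact absurd (Finset.mem_univ s) h
      rw [e2]
      have hcne : ∃ s, c s ≠ 0 := by
        by_contra h
        push_neg at h
        apply hx
        rw [hrep]
        simp [h]
      obtain ⟨s₀, hs₀⟩ := hcne
      apply Finset.sum_pos'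
      · intro s _
        have := (hmupos s).le
        nlinarith [sq_nonneg (c s)]
      · exact ⟨s₀, Finset.mem_univ s₀, by nlinarith [hmupos s₀, mul_self_pos.mpr hs₀]⟩
    -- the key identities
    intro p q r
    constructor
    · have h := (hvanish j hj1 hj2 hj3 (b (Sum.inl p)) (b (Sum.inl q)) (b (Sum.inl r))).2
      rw [hjl, hjl, hjl] at h
      simp only [map_smul, LinearMap.smul_apply, smul_eq_mul] at h
      linear_combination h
    · have h := (hvanish j hj1 hj2 hj3 (b (Sum.inr p)) (b (Sum.inr q)) (b (Sum.inr r))).2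
      rw [hjr, hjr, hjr] at h
      simp only [map_smul, LinearMap.smul_apply, smul_eq_mul] at h
      linear_combination h

  classical
  have hsymm13 : ∀ X Y Z : V, T X Y Z = T Z Y X := by
    intro X Y Z
    rw [hsymm23, hsymm12, hsymm23]
  have master : ∀ p q r : Fin n,
      T (b (.inl p)) (b (.inl q)) (b (.inl r)) = 0 ∧
      T (b (.inr p)) (b (.inr q)) (b (.inr r)) = 0 ∧
      T (b (.inl p)) (b (.inr q)) (b (.inr r)) = 0 ∧
      T (b (.inr p)) (b (.inl q)) (b (.inl r)) = 0 := by
    intro p q r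
    rcases eq_or_ne p q with hpq | hpq
    · subst hpq
      rcases eq_or_ne p r with hpr | hpr
      · -- all equal
        subst hpr
        have k1 := key (fun _ => 1) (by intro i; norm_num) p p p
        have k2 := key (fun _ => 2) (by intro i; norm_num) p p p
        obtain ⟨e1, f1⟩ := k1
        obtain ⟨e2, f2⟩ := k2
        have s1 : T (b (.inl p)) (b (.inr p)) (b (.inl p))
            = T (b (.inr p)) (b (.inl p)) (b (.inl p)) := hsymm12 _ _ _
        have s2 : T (b (.inl p)) (b (.inl p)) (b (.inr p))
            = T (b (.inr p)) (b (.inl p)) (b (.inl p)) := hsymm13 _ _ _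
        have s3 : T (b (.inr p)) (b (.inl p)) (b (.inr p))
            = T (b (.inl p)) (b (.inr p)) (b (.inr p)) := hsymm12 _ _ _
        have s4 : T (b (.inr p)) (b (.inr p)) (b (.inl p))
            = T (b (.inl p)) (b (.inr p)) (b (.inr p)) := hsymm13 _ _ _
        norm_num at e1 f1 e2 f2
        exact ⟨by linarith, by linarith, by linarith, by linarith⟩
      · -- p = q ≠ r
        have hrp : r ≠ p := Ne.symm hpr
        have L : ∀ a c : ℝ, 0 < a → 0 < c → ∀ i : Fin n,
            (0:ℝ) < (if i = p then a else if i = r then c else 1) := by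
          intro a c ha hc i; split_ifs <;> norm_num [ha, hc]
        have kk : ∀ a c : ℝ, 0 < a → 0 < c → _ := fun a c ha hc =>
          key (fun i => if i = p then a else if i = r then c else 1) (L a c ha hc) p p r
        have k11 := kk 1 1 (by norm_num) (by norm_num)
        have k21 := kk 2 1 (by norm_num) (by norm_num)
        have k12 := kk 1 2 (by norm_num) (by norm_num)
        simp only [if_pos rfl, if_neg hrp] at k11 k21 k12
        obtain ⟨e1, f1⟩ := k11
        obtain ⟨e2, f2⟩ := k21
        obtain ⟨e3, f3⟩ := k12
        have s1 : T (b (.inl p)) (b (.inr p)) (b (.inl r))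
            = T (b (.inr p)) (b (.inl p)) (b (.inl r)) := hsymm12 _ _ _
        have s2 : T (b (.inr p)) (b (.inl p)) (b (.inr r))
            = T (b (.inl p)) (b (.inr p)) (b (.inr r)) := hsymm12 _ _ _
        norm_num at e1 f1 e2 f2 e3 f3
        exact ⟨by linarith, by linarith, by linarith, by linarith⟩
    · rcases eq_or_ne p r with hpr | hpr
      · -- p = r ≠ q
        subst hpr
        have hqp : q ≠ p := Ne.symm hpq
        have L : ∀ a c : ℝ, 0 < a → 0 < c → ∀ i : Fin n,
            (0:ℝ) < (if i = p then a else if i = q then c else 1) := by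
          intro a c ha hc i; split_ifs <;> norm_num [ha, hc]
        have kk : ∀ a c : ℝ, 0 < a → 0 < c → _ := fun a c ha hc =>
          key (fun i => if i = p then a else if i = q then c else 1) (L a c ha hc) p q p
        have k11 := kk 1 1 (by norm_num) (by norm_num)
        have k21 := kk 2 1 (by norm_num) (by norm_num)
        have k12 := kk 1 2 (by norm_num) (by norm_num)
        simp only [if_pos rfl, if_neg hqp] at k11 k21 k12
        obtain ⟨e1, f1⟩ := k11
        obtain ⟨e2, f2⟩ := k21
        obtain ⟨e3, f3⟩ := k12
        have s1 : T (b (.inl p)) (b (.inl q)) (b (.inr p))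
            = T (b (.inr p)) (b (.inl q)) (b (.inl p)) := hsymm13 _ _ _
        have s2 : T (b (.inr p)) (b (.inr q)) (b (.inl p))
            = T (b (.inl p)) (b (.inr q)) (b (.inr p)) := hsymm13 _ _ _
        norm_num at e1 f1 e2 f2 e3 f3
        exact ⟨by linarith, by linarith, by linarith, by linarith⟩
      · rcases eq_or_ne q r with hqr | hqr
        · -- q = r ≠ p
          subst hqr
          have hqp : q ≠ p := Ne.symm hpq
          have L : ∀ a c : ℝ, 0 < a → 0 < c → ∀ i : Fin n,
              (0:ℝ) < (if i = p then a else if i = q then c else 1) := by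
            intro a c ha hc i; split_ifs <;> norm_num [ha, hc]
          have kk : ∀ a c : ℝ, 0 < a → 0 < c → _ := fun a c ha hc =>
            key (fun i => if i = p then a else if i = q then c else 1) (L a c ha hc) p q q
          have k11 := kk 1 1 (by norm_num) (by norm_num)
          have k21 := kk 2 1 (by norm_num) (by norm_num)
          have k12 := kk 1 2 (by norm_num) (by norm_num)
          simp only [if_pos rfl, if_neg hqp] at k11 k21 k12
          obtain ⟨e1, f1⟩ := k11
          obtain ⟨e2, f2⟩ := k21
          obtain ⟨e3, f3⟩ := k12
          have s1 : T (b (.inl p)) (b (.inl q)) (b (.inr q))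
              = T (b (.inl p)) (b (.inr q)) (b (.inl q)) := hsymm23 _ _ _
          have s2 : T (b (.inr p)) (b (.inr q)) (b (.inl q))
              = T (b (.inr p)) (b (.inl q)) (b (.inr q)) := hsymm23 _ _ _
          norm_num at e1 f1 e2 f2 e3 f3
          exact ⟨by linarith, by linarith, by linarith, by linarith⟩
        · -- all distinct
          have hqp : q ≠ p := Ne.symm hpq
          have hrp : r ≠ p := Ne.symm hpr
          have hrq : r ≠ q := Ne.symm hqr
          have L : ∀ a c d : ℝ, 0 < a → 0 < c → 0 < d → ∀ i : Fin n,
              (0:ℝ) < (if i = p then a else if i = q then c else if i = r then d else 1) := by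
            intro a c d ha hc hd i; split_ifs <;> norm_num [ha, hc, hd]
          have kk : ∀ a c d : ℝ, 0 < a → 0 < c → 0 < d → _ := fun a c d ha hc hd =>
            key (fun i => if i = p then a else if i = q then c else if i = r then d else 1)
              (L a c d ha hc hd) p q r
          have k111 := kk 1 1 1 (by norm_num) (by norm_num) (by norm_num)
          have k211 := kk 2 1 1 (by norm_num) (by norm_num) (by norm_num)
          have k121 := kk 1 2 1 (by norm_num) (by norm_num) (by norm_num)
          have k112 := kk 1 1 2 (by norm_num) (by norm_num) (by norm_num)
          simp only [if_pos rfl, if_neg hqp, if_neg hrp, if_neg hrq] at k111 k211 k121 k112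
          obtain ⟨e1, f1⟩ := k111
          obtain ⟨e2, f2⟩ := k211
          obtain ⟨e3, f3⟩ := k121
          obtain ⟨e4, f4⟩ := k112
          norm_num at e1 f1 e2 f2 e3 f3 e4 f4
          exact ⟨by linarith, by linarith, by linarith, by linarith⟩
  -- all basis coefficients vanish
  have hall : ∀ s1 s2 s3 : Fin n ⊕ Fin n, T (b s1) (b s2) (b s3) = 0 := by
    intro s1 s2 s3
    cases s1 with
    | inl p =>
      cases s2 with
      | inl q =>
        cases s3 with
        | inl r => exact (master p q r).1
        | inr r =>
          rw [hsymm13]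
          exact (master r q p).2.2.2
      | inr q =>
        cases s3 with
        | inl r =>
          rw [hsymm23]
          rw [hsymm13]
          exact (master q r p).2.2.2
        | inr r => exact (master p q r).2.2.1
    | inr p =>
      cases s2 with
      | inl q =>
        cases s3 with
        | inl r => exact (master p q r).2.2.2
        | inr r =>
          rw [hsymm12]
          exact (master q p r).2.2.1
      | inr q =>
        cases s3 with
        | inl r =>
          rw [hsymm13]
          exact (master r q p).2.2.1
        | inr r => exact (master p q r).2.1
  have hT : T = 0 := by
    apply b.ext
    intro s1
    apply b.ext
    intro s2
    apply b.ext
    intro s3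
    simpa using hall s1 s2 s3
  intro X Y Z
  rw [hT]
  simp
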